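/- Let A₁, ..., A₄ be complex vector spaces, aⱼⁱ ∈ Aᵢ vectors, and define S(t) = (a¹₁ + t a¹₃ + t² a¹₂) ⊗ (a²₁ + t² a²₂) ⊗ (a³₁ + t a³₂ + t² λ a³₂) ⊗ (b₃ + t b₂ + t² b₁) for b₁, b₂, b₃ ∈ A₄ and λ ∈ ℂ. Then (1/2)S''(0) = a¹₁ ⊗ a²₁ ⊗ a³₁ ⊗ b₁ + a¹₁ ⊗ a²₁ ⊗ (λ a³₂) ⊗ b₃ + a¹₁ ⊗ a²₂ ⊗ a³₁ ⊗ b₃ + a¹₂ ⊗ a²₁ ⊗ a³₁ ⊗ b₃ + a¹₁ ⊗ a²₁ ⊗ a³₂ ⊗ b₂ + a¹₃ ⊗ a²₁ ⊗ a³₁ ⊗ b₂ + a¹₃ ⊗ a²₁ ⊗ a³₂ ⊗ b₃, and consequently this tensor has border rank at most 3. -/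

import Mathlib

/-!
Expanding the product of the four quadratic curves gives `S t = ∑ tᵏ cₖ`, with `c₂` the displayed
tensor. The symmetric second difference quotient `(S t + S (-t) - 2 S 0) / (2 t²)` equals
`c₂ + t² c₄ + t⁴ c₆ + t⁶ c₈`, so it tends to `c₂` as `t → 0`; for `t ≠ 0` it is a combination of the
three simple tensors `S t`, `S (-t)`, `S 0`, hence has rank at most `3`.
-/

open TensorProduct

noncomputable section

variable {A₁ A₂ A₃ A₄ : Type*} [AddCommGroup A₁] [Module ℂ A₁] [AddCommGroup A₂] [Module ℂ A₂]
  [AddCommGroup A₃] [Module ℂ A₃] [AddCommGroup A₄] [Module ℂ A₄]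

/-- `T ∈ A₁ ⊗ A₂ ⊗ A₃ ⊗ A₄` has tensor rank at most `r`. -/
def rank4LE (r : ℕ) (T : A₁ ⊗[ℂ] (A₂ ⊗[ℂ] (A₃ ⊗[ℂ] A₄))) : Prop :=
  ∃ (a : Fin r → A₁) (b : Fin r → A₂) (c : Fin r → A₃) (d : Fin r → A₄),
    T = ∑ i, a i ⊗ₜ[ℂ] (b i ⊗ₜ[ℂ] (c i ⊗ₜ[ℂ] d i))

open Filter Topology

def symmSecondDiffQuotient {𝕜 M : Type*} [Field 𝕜] [AddCommGroup M] [Module 𝕜 M]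
    (S : 𝕜 → M) (t : 𝕜) : M :=
  (2 * t ^ 2)⁻¹ • (S t + S (-t) - (2 : 𝕜) • S 0)

section SecondDifference

variable {𝕜 M : Type*} [NormedField 𝕜] [CharZero 𝕜] [AddCommGroup M] [Module 𝕜 M]

theorem symmSecondDiffQuotient_sum_smul (c : ℕ → M) (N : ℕ) (t : 𝕜) :
    symmSecondDiffQuotient (fun t => ∑ k ∈ Finset.range N, t ^ k • c k) t
      = ∑ k ∈ Finset.range N, symmSecondDiffQuotient (fun t : 𝕜 => t ^ k) t • c k := by
  simp only [symmSecondDiffQuotient, Finset.smul_sum, ← Finset.sum_add_distrib,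
    ← Finset.sum_sub_distrib, smul_eq_mul]
  exact Finset.sum_congr rfl fun k _ => by module

theorem tendsto_symmSecondDiffQuotient_pow (k : ℕ) :
    Tendsto (symmSecondDiffQuotient fun t : 𝕜 => t ^ k) (𝓝[≠] 0)
      (𝓝 (if k = 2 then 1 else 0)) := by
  match k with
  | 0 =>
    convert tendsto_const_nhds using 1
    funext t
    simp only [symmSecondDiffQuotient]
    norm_num
  | 1 =>
    convert tendsto_const_nhds using 1
    funext t
    simp [symmSecondDiffQuotient]
  | 2 =>
    refine tendsto_const_nhds.congr' (eventually_nhdsWithin_of_forall fun t (ht : t ≠ 0) => ?_)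
    simp only [symmSecondDiffQuotient, smul_eq_mul, if_true]
    field_simp
    ring
  | m + 3 =>
    have hlim : Tendsto (fun t : 𝕜 => (1 + (-1) ^ (m + 3)) / 2 * t ^ (m + 1)) (𝓝[≠] 0) (𝓝 0) := by
      have := (((continuous_pow (m + 1)).const_mul ((1 + (-1) ^ (m + 3)) / 2 : 𝕜)).tendsto
        0).mono_left (nhdsWithin_le_nhds (s := {0}ᶜ))
      simpa using this
    rw [if_neg (by omega)]
    refine hlim.congr' (eventually_nhdsWithin_of_forall fun t (ht : t ≠ 0) => ?_)
    simp only [symmSecondDiffQuotient, smul_eq_mul]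
    field_simp
    ring

theorem tendsto_symmSecondDiffQuotient_of_eq_sum [TopologicalSpace M] [ContinuousAdd M]
    [ContinuousSMul 𝕜 M] {S : 𝕜 → M} {c : ℕ → M} {N : ℕ}
    (hS : ∀ t, S t = ∑ k ∈ Finset.range N, t ^ k • c k) (hN : 2 < N) :
    Tendsto (symmSecondDiffQuotient S) (𝓝[≠] 0) (𝓝 (c 2)) := by
  have hS' : symmSecondDiffQuotient S
      = fun t => ∑ k ∈ Finset.range N, symmSecondDiffQuotient (fun t : 𝕜 => t ^ k) t • c k :=
    funext fun t => by rw [← symmSecondDiffQuotient_sum_smul, ← funext hS]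
  have hsum : c 2 = ∑ k ∈ Finset.range N, (if k = 2 then (1 : 𝕜) else 0) • c k := by
    rw [Finset.sum_eq_single_of_mem 2 (Finset.mem_range.2 hN) fun k _ hk => by simp [hk],
      if_pos rfl, one_smul]
  rw [hS', hsum]
  exact tendsto_finsetSum _ fun k _ => (tendsto_symmSecondDiffQuotient_pow k).smul_const (c k)

end SecondDifference

theorem rank4LE_add {r s : ℕ} {T T' : A₁ ⊗[ℂ] (A₂ ⊗[ℂ] (A₃ ⊗[ℂ] A₄))}
    (hT : rank4LE r T) (hT' : rank4LE s T') : rank4LE (r + s) (T + T') := by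
  obtain ⟨a, b, c, d, rfl⟩ := hT
  obtain ⟨a', b', c', d', rfl⟩ := hT'
  exact ⟨Fin.append a a', Fin.append b b', Fin.append c c', Fin.append d d',
    by simp [Fin.sum_univ_add]⟩

theorem rank4LE_smul {r : ℕ} {T : A₁ ⊗[ℂ] (A₂ ⊗[ℂ] (A₃ ⊗[ℂ] A₄))} (α : ℂ)
    (hT : rank4LE r T) : rank4LE r (α • T) := by
  obtain ⟨a, b, c, d, rfl⟩ := hT
  exact ⟨α • a, b, c, d, by simp [Finset.smul_sum, smul_tmul']⟩

theorem rank4LE_one_tmul (a : A₁) (b : A₂) (c : A₃) (d : A₄) :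
    rank4LE 1 (a ⊗ₜ[ℂ] (b ⊗ₜ[ℂ] (c ⊗ₜ[ℂ] d))) :=
  ⟨![a], ![b], ![c], ![d], by simp⟩

theorem rank4LE_three_symmSecondDiffQuotient {S : ℂ → A₁ ⊗[ℂ] (A₂ ⊗[ℂ] (A₃ ⊗[ℂ] A₄))}
    (hS : ∀ t, rank4LE 1 (S t)) (t : ℂ) : rank4LE 3 (symmSecondDiffQuotient S t) := by
  have hsplit : symmSecondDiffQuotient S t
      = (2 * t ^ 2)⁻¹ • S t + (2 * t ^ 2)⁻¹ • S (-t) + (-(2 * t ^ 2)⁻¹ * 2) • S 0 := by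
    simp only [symmSecondDiffQuotient]
    module
  rw [hsplit]
  exact rank4LE_add (rank4LE_add (rank4LE_smul _ (hS t)) (rank4LE_smul _ (hS (-t))))
    (rank4LE_smul _ (hS 0))

theorem mem_closure_rank4LE_three_of_eq_sum [TopologicalSpace (A₁ ⊗[ℂ] (A₂ ⊗[ℂ] (A₃ ⊗[ℂ] A₄)))]
    [ContinuousAdd (A₁ ⊗[ℂ] (A₂ ⊗[ℂ] (A₃ ⊗[ℂ] A₄)))]
    [ContinuousSMul ℂ (A₁ ⊗[ℂ] (A₂ ⊗[ℂ] (A₃ ⊗[ℂ] A₄)))]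
    {S : ℂ → A₁ ⊗[ℂ] (A₂ ⊗[ℂ] (A₃ ⊗[ℂ] A₄))} {c : ℕ → A₁ ⊗[ℂ] (A₂ ⊗[ℂ] (A₃ ⊗[ℂ] A₄))} {N : ℕ}
    (hS : ∀ t, S t = ∑ k ∈ Finset.range N, t ^ k • c k) (hN : 2 < N)
    (hrank : ∀ t, rank4LE 1 (S t)) :
    c 2 ∈ closure {R : A₁ ⊗[ℂ] (A₂ ⊗[ℂ] (A₃ ⊗[ℂ] A₄)) | rank4LE 3 R} :=
  mem_closure_of_tendsto (tendsto_symmSecondDiffQuotient_of_eq_sum hS hN)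
    (Eventually.of_forall (rank4LE_three_symmSecondDiffQuotient hrank))

def tmulCoeff {n : ℕ} (p : Fin n → A₁) (q : Fin n → A₂) (r : Fin n → A₃) (s : Fin n → A₄)
    (k : ℕ) : A₁ ⊗[ℂ] (A₂ ⊗[ℂ] (A₃ ⊗[ℂ] A₄)) :=
  ∑ i : Fin n, ∑ j : Fin n, ∑ l : Fin n, ∑ m : Fin n,
    if (i : ℕ) + j + l + m = k then p i ⊗ₜ[ℂ] (q j ⊗ₜ[ℂ] (r l ⊗ₜ[ℂ] s m)) else 0

theorem sum_pow_smul_tmul_eq_sum_tmulCoeff {n N : ℕ} (hN : 4 * n ≤ N + 3) (p : Fin n → A₁)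
    (q : Fin n → A₂) (r : Fin n → A₃) (s : Fin n → A₄) (t : ℂ) :
    (∑ i : Fin n, t ^ (i : ℕ) • p i) ⊗ₜ[ℂ] ((∑ j : Fin n, t ^ (j : ℕ) • q j) ⊗ₜ[ℂ]
      ((∑ l : Fin n, t ^ (l : ℕ) • r l) ⊗ₜ[ℂ] (∑ m : Fin n, t ^ (m : ℕ) • s m)))
      = ∑ k ∈ Finset.range N, t ^ k • tmulCoeff p q r s k := by
  have hmono : ∀ (i j l m : Fin n),
      ∑ k ∈ Finset.range N, t ^ k •
        (if (i : ℕ) + j + l + m = k then p i ⊗ₜ[ℂ] (q j ⊗ₜ[ℂ] (r l ⊗ₜ[ℂ] s m)) else 0)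
      = t ^ ((i : ℕ) + j + l + m) • p i ⊗ₜ[ℂ] (q j ⊗ₜ[ℂ] (r l ⊗ₜ[ℂ] s m)) := by
    intro i j l m
    simp only [smul_ite, smul_zero]
    rw [Finset.sum_ite_eq, if_pos (Finset.mem_range.2 (by omega))]
  simp only [sum_tmul]
  simp only [tmul_sum, ← smul_tmul', tmul_smul, smul_smul, ← pow_add, tmulCoeff,
    Finset.smul_sum]
  conv_rhs => rw [Finset.sum_comm]
  refine Finset.sum_congr rfl fun i _ => ?_
  conv_rhs => rw [Finset.sum_comm]
  refine Finset.sum_congr rfl fun j _ => ?_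
  conv_rhs => rw [Finset.sum_comm]
  refine Finset.sum_congr rfl fun l _ => ?_
  conv_rhs => rw [Finset.sum_comm]
  exact Finset.sum_congr rfl fun m _ => by rw [hmono]; congr 2; omega

/-- for the curve
`S(t) = (a¹₁ + t a¹₃ + t² a¹₂) ⊗ (a²₁ + t² a²₂) ⊗ (a³₁ + t a³₂ + t² λ a³₂) ⊗ (b₃ + t b₂ + t² b₁)`,
the tensor `(1/2) S''(0)` (i.e. the coefficient of `t²` in the polynomial expansion of `S`)
equals the displayed seven-term tensor, which consequently has border rank at most `3`. -/
theorem second_derivative_normal_form_case2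
    [TopologicalSpace (A₁ ⊗[ℂ] (A₂ ⊗[ℂ] (A₃ ⊗[ℂ] A₄)))]
    [IsTopologicalAddGroup (A₁ ⊗[ℂ] (A₂ ⊗[ℂ] (A₃ ⊗[ℂ] A₄)))]
    [ContinuousSMul ℂ (A₁ ⊗[ℂ] (A₂ ⊗[ℂ] (A₃ ⊗[ℂ] A₄)))]
    (a11 a12 a13 : A₁) (a21 a22 : A₂) (a31 a32 : A₃) (b₁ b₂ b₃ : A₄) (lam : ℂ)
    (S : ℂ → A₁ ⊗[ℂ] (A₂ ⊗[ℂ] (A₃ ⊗[ℂ] A₄)))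
    (hS : ∀ t, S t = (a11 + t • a13 + t ^ 2 • a12) ⊗ₜ[ℂ]
      ((a21 + t ^ 2 • a22) ⊗ₜ[ℂ]
        ((a31 + t • a32 + (t ^ 2 * lam) • a32) ⊗ₜ[ℂ] (b₃ + t • b₂ + t ^ 2 • b₁))))
    (T : A₁ ⊗[ℂ] (A₂ ⊗[ℂ] (A₃ ⊗[ℂ] A₄)))
    (hT : T = a11 ⊗ₜ[ℂ] (a21 ⊗ₜ[ℂ] (a31 ⊗ₜ[ℂ] b₁))
      + a11 ⊗ₜ[ℂ] (a21 ⊗ₜ[ℂ] ((lam • a32) ⊗ₜ[ℂ] b₃))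
      + a11 ⊗ₜ[ℂ] (a22 ⊗ₜ[ℂ] (a31 ⊗ₜ[ℂ] b₃))
      + a12 ⊗ₜ[ℂ] (a21 ⊗ₜ[ℂ] (a31 ⊗ₜ[ℂ] b₃))
      + a11 ⊗ₜ[ℂ] (a21 ⊗ₜ[ℂ] (a32 ⊗ₜ[ℂ] b₂))
      + a13 ⊗ₜ[ℂ] (a21 ⊗ₜ[ℂ] (a31 ⊗ₜ[ℂ] b₂))
      + a13 ⊗ₜ[ℂ] (a21 ⊗ₜ[ℂ] (a32 ⊗ₜ[ℂ] b₃))) :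
    (∃ c : ℕ → A₁ ⊗[ℂ] (A₂ ⊗[ℂ] (A₃ ⊗[ℂ] A₄)),
        (∀ t, S t = ∑ k ∈ Finset.range 9, t ^ k • c k) ∧ c 2 = T) ∧
      T ∈ closure {R : A₁ ⊗[ℂ] (A₂ ⊗[ℂ] (A₃ ⊗[ℂ] A₄)) | rank4LE 3 R} := by
  set p : Fin 3 → A₁ := ![a11, a13, a12]
  set q : Fin 3 → A₂ := ![a21, 0, a22]
  set r : Fin 3 → A₃ := ![a31, a32, lam • a32]
  set s : Fin 3 → A₄ := ![b₃, b₂, b₁]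
  have hcurve : ∀ t, S t = ∑ k ∈ Finset.range 9, t ^ k • tmulCoeff p q r s k := fun t => by
    rw [hS, ← sum_pow_smul_tmul_eq_sum_tmulCoeff (by norm_num)]
    simp [Fin.sum_univ_three, p, q, r, s, mul_smul]
  have hc2 : tmulCoeff p q r s 2 = T := by
    rw [hT]
    simp only [tmulCoeff, Fin.sum_univ_three, Fin.isValue, Fin.coe_ofNat_eq_mod, Nat.zero_mod,
      add_zero, Matrix.cons_val_zero, Nat.one_mod, Nat.reduceEqDiff, Matrix.cons_val_one,
      Nat.mod_succ, Nat.add_eq_right, Nat.add_eq_zero_iff, Fin.val_eq_zero_iff, Matrix.cons_val,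
      and_true, one_ne_zero, and_false, ↓reduceIte, Fin.reduceEq, zero_tmul, tmul_zero, ite_self,
      OfNat.zero_ne_ofNat, zero_ne_one, zero_add, OfNat.one_ne_ofNat, OfNat.ofNat_ne_one, p, q,
      r, s]
    abel
  refine ⟨⟨_, hcurve, hc2⟩, hc2 ▸ mem_closure_rank4LE_three_of_eq_sum hcurve (by norm_num)
    fun t => ?_⟩
  rw [hS]
  exact rank4LE_one_tmul _ _ _ _

end
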